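/- (Theorem 4.2.) Let x̄ be an isolated local minimizer of problem (P), let X be closed, let f be Lipschitz with constant L on N_δ(x̄) ∩ X for some δ > 0, let the functions g_i (i = 1,…,m) be lower semicontinuous, let the functions h_j (j = 1,…,q) be Hadamard differentiable on X and lower semicontinuous, and suppose there exists a > 0 with d(x) ≤ −a for all x ∈ N_δ(x̄) \ S. Then there exists an integer s such that x̄ is an isolated local minimizer of x ↦ F(x,γ) over G for every γ > s; i.e., for every γ > s there exist A > 0 and a neighborhood N of x̄ with F(x,γ) ≥ F(x̄,γ) + A‖x − x̄‖ for all x ∈ G ∩ N. -/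

import Mathlib

open Filter Topology

noncomputable section

/-- The lower Hadamard directional derivative of `f` at `x` in direction `u` with respect to
the set `S`, as an extended real number.  It is the `liminf` of the difference quotients
`(f (x + t • u') - f x) / t` as `(t, u') → (0⁺, u)` subject to `x + t • u' ∈ S`.
When `u` is not in the Bouligand tangent cone of `S` at `x` the restricting filter is the
bottom filter, and the `liminf` is `+∞`, in accordance with the convention
`∂⁻f(x;u;S) = +∞` for `u ∉ T(S,x)`. -/
def lowerHadamardDeriv {l : ℕ} (f : EuclideanSpace ℝ (Fin l) → ℝ) (S : Set (EuclideanSpace ℝ (Fin l)))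
    (x u : EuclideanSpace ℝ (Fin l)) : EReal :=
  Filter.liminf
    (fun p : ℝ × EuclideanSpace ℝ (Fin l) => (((f (x + p.1 • p.2) - f x) / p.1 : ℝ) : EReal))
    ((nhdsWithin (0 : ℝ) (Set.Ioi 0) ×ˢ nhds u) ⊓
      Filter.principal {p : ℝ × EuclideanSpace ℝ (Fin l) | x + p.1 • p.2 ∈ S})

/-- `f` is Hadamard differentiable at `x` in direction `u` with respect to `S`, with
(extended real) derivative `d`: the full limit of the difference quotients
`(f (x + t • u') - f x) / t` as `(t, u') → (0⁺, u)` subject to `x + t • u' ∈ S` exists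
and equals `d`. -/
def HasHadamardDerivAt {l : ℕ} (f : EuclideanSpace ℝ (Fin l) → ℝ) (S : Set (EuclideanSpace ℝ (Fin l)))
    (x u : EuclideanSpace ℝ (Fin l)) (d : EReal) : Prop :=
  Filter.Tendsto
    (fun p : ℝ × EuclideanSpace ℝ (Fin l) => (((f (x + p.1 • p.2) - f x) / p.1 : ℝ) : EReal))
    ((nhdsWithin (0 : ℝ) (Set.Ioi 0) ×ˢ nhds u) ⊓
      Filter.principal {p : ℝ × EuclideanSpace ℝ (Fin l) | x + p.1 • p.2 ∈ S})
    (nhds d)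

/-- The Bouligand tangent cone (contingent cone) of `S` at `x`. -/
def bouligandCone {l : ℕ} (S : Set (EuclideanSpace ℝ (Fin l))) (x : EuclideanSpace ℝ (Fin l)) : Set (EuclideanSpace ℝ (Fin l)) :=
  {u | ∃ (t : ℕ → ℝ) (v : ℕ → EuclideanSpace ℝ (Fin l)),
    (∀ k, 0 < t k) ∧ Filter.Tendsto t Filter.atTop (nhds 0) ∧
    Filter.Tendsto v Filter.atTop (nhds u) ∧ ∀ k, x + t k • v k ∈ S}

/-- `h := h₁² + ⋯ + h_q²`. -/
def hsum {l q : ℕ} (hf : Fin q → EuclideanSpace ℝ (Fin l) → ℝ) (x : EuclideanSpace ℝ (Fin l)) : ℝ :=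
  ∑ j, (hf j x) ^ 2

/-- `G := {x ∈ X : gᵢ(x) ≤ 0, i = 1,…,m}`. -/
def Gset {l m : ℕ} (X : Set (EuclideanSpace ℝ (Fin l))) (g : Fin m → EuclideanSpace ℝ (Fin l) → ℝ) : Set (EuclideanSpace ℝ (Fin l)) :=
  {x ∈ X | ∀ i, g i x ≤ 0}

/-- The feasible set `S := {x ∈ G : h(x) = 0}` of problem (P). -/
def Sset {l m q : ℕ} (X : Set (EuclideanSpace ℝ (Fin l))) (g : Fin m → EuclideanSpace ℝ (Fin l) → ℝ)
    (hf : Fin q → EuclideanSpace ℝ (Fin l) → ℝ) : Set (EuclideanSpace ℝ (Fin l)) :=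
  {x ∈ Gset X g | hsum hf x = 0}

/-- The penalty function `F(x,γ) := f(x) + γ h(x) + ½‖x - xbar‖²`. -/
def Fpen {l q : ℕ} (f : EuclideanSpace ℝ (Fin l) → ℝ) (hf : Fin q → EuclideanSpace ℝ (Fin l) → ℝ)
    (xbar : EuclideanSpace ℝ (Fin l)) (γ : ℝ) (x : EuclideanSpace ℝ (Fin l)) : ℝ :=
  f x + γ * hsum hf x + (1 / 2) * ‖x - xbar‖ ^ 2

/-- `d(x) := inf {∂⁻h(x;u;X) : u ∈ T(G,x), ‖u‖ = 1}` (an infimum in the extended reals). -/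
def dFun {l m q : ℕ} (hf : Fin q → EuclideanSpace ℝ (Fin l) → ℝ) (X : Set (EuclideanSpace ℝ (Fin l)))
    (g : Fin m → EuclideanSpace ℝ (Fin l) → ℝ) (x : EuclideanSpace ℝ (Fin l)) : EReal :=
  sInf {r : EReal | ∃ u ∈ bouligandCone (Gset X g) x, ‖u‖ = 1 ∧
    lowerHadamardDeriv (hsum hf) X x u = r}

/-! Near `xbar` the hypothesis on `d` gives every infeasible point a direction along which `h`
decreases with slope at least `a / 2`.  Minimizing `h + (a / 4) ‖· - x‖` over a small closed ball
around `x` (compactness replacing Ekeland's principle) therefore yields a feasible `x'` with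
`(a / 4) ‖x - x'‖ ≤ h x`.  For `x ∈ G` near `xbar`, Lipschitz continuity of `f` and isolation of
`xbar` give `f xbar + A ‖x - xbar‖ ≤ f x + (L + A) ‖x - x'‖`, and the error bound turns the last
term into at most `γ h x` as soon as `γ (a / 4) ≥ L + A`.  Finiteness of `d` also forces the ball
around `xbar` into the closed set `G ⊆ X`, where Hadamard differentiability of the `hⱼ` makes `h`
continuous. -/

open Metric

theorem exists_zero_of_forall_descent {E : Type*} [MetricSpace E] [ProperSpace E]
    {φ : E → ℝ} {x : E} {ρ c : ℝ} (hc : 0 < c) (hφ : ContinuousOn φ (closedBall x ρ))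
    (hφ0 : ∀ y, 0 ≤ φ y) (hx : φ x < c * ρ)
    (hdesc : ∀ y ∈ ball x ρ, 0 < φ y → ∀ r > 0, ∃ z, dist y z < r ∧ φ z + c * dist y z < φ y) :
    ∃ x', φ x' = 0 ∧ c * dist x x' ≤ φ x := by
  have hρ : 0 < ρ := pos_of_mul_pos_right ((hφ0 x).trans_lt hx) hc.le
  obtain ⟨xh, -, hmin⟩ := (isCompact_closedBall x ρ).exists_isMinOn
    (f := fun y => φ y + c * dist x y) (nonempty_closedBall.2 hρ.le) (by fun_prop)
  have hle : φ xh + c * dist x xh ≤ φ x := by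
    simpa using hmin (mem_closedBall_self hρ.le)
  have hin : dist x xh < ρ := lt_of_mul_lt_mul_left (by linarith [hφ0 xh]) hc.le
  refine ⟨xh, ?_, by linarith [hφ0 xh]⟩
  by_contra hne
  obtain ⟨z, hz, hdz⟩ := hdesc xh (by rwa [mem_ball, dist_comm]) ((hφ0 xh).lt_of_ne' hne)
    (ρ - dist x xh) (by linarith)
  have hzK : z ∈ closedBall x ρ := by
    rw [mem_closedBall, dist_comm]; linarith [dist_triangle x xh z]
  have hψ : φ xh + c * dist x xh ≤ φ z + c * dist x z := hmin hzK
  nlinarith [dist_triangle x xh z]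

theorem le_add_mul_of_dist_le {E : Type*} [SeminormedAddCommGroup E] {f : E → ℝ} {xbar x x' : E}
    {A L c γ r : ℝ} (hA : 0 ≤ A) (hγ0 : 0 ≤ γ) (hγ : L + A ≤ γ * c)
    (hmin : f xbar + A * ‖x' - xbar‖ ≤ f x') (hlip : |f x - f x'| ≤ L * ‖x - x'‖)
    (herr : c * ‖x - x'‖ ≤ r) :
    f xbar + A * ‖x - xbar‖ ≤ f x + γ * r := by
  have htri : ‖x - xbar‖ ≤ ‖x - x'‖ + ‖x' - xbar‖ := norm_sub_le_norm_sub_add_norm_sub _ _ _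
  calc f xbar + A * ‖x - xbar‖ ≤ f x' + A * ‖x - x'‖ := by nlinarith
    _ ≤ f x + (L + A) * ‖x - x'‖ := by linarith [neg_abs_le (f x - f x')]
    _ ≤ f x + γ * c * ‖x - x'‖ := by gcongr
    _ ≤ f x + γ * r := by nlinarith

section Hadamard

variable {l : ℕ} {f : EuclideanSpace ℝ (Fin l) → ℝ} {S : Set (EuclideanSpace ℝ (Fin l))}
  {x u : EuclideanSpace ℝ (Fin l)}

theorem HasHadamardDerivAt.eq_zero_of_zero_dir {d : EReal} (hx : x ∈ S)
    (hd : HasHadamardDerivAt f S x 0 d) : d = 0 := by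
  have hpath : Tendsto (fun t : ℝ => (t, (0 : EuclideanSpace ℝ (Fin l)))) (𝓝[>] 0)
      ((𝓝[>] 0 ×ˢ 𝓝 0) ⊓ 𝓟 {p | x + p.1 • p.2 ∈ S}) :=
    tendsto_inf.2 ⟨tendsto_id.prodMk tendsto_const_nhds, tendsto_principal.2 (by simpa)⟩
  refine tendsto_nhds_unique (hd.comp hpath) (tendsto_const_nhds.congr fun t => ?_)
  simp

theorem HasHadamardDerivAt.continuousAt {d : EReal} (hS : S ∈ 𝓝 x)
    (hd : HasHadamardDerivAt f S x 0 d) : ContinuousAt f x := by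
  obtain rfl := hd.eq_zero_of_zero_dir (mem_of_mem_nhds hS)
  -- approach `x` along `y = x + τ • (τ⁻¹ • (y - x))` with `τ = √‖y - x‖`, so both factors tend to 0
  set τ : EuclideanSpace ℝ (Fin l) → ℝ := fun y => √‖y - x‖
  have hτ : Tendsto τ (𝓝 x) (𝓝 0) :=
    Real.sqrt_zero ▸ (Real.continuous_sqrt.tendsto 0).comp (tendsto_norm_sub_self x)
  have hτpos : ∀ y ≠ x, 0 < τ y := fun y hy => Real.sqrt_pos.2 (norm_pos_iff.2 (sub_ne_zero.2 hy))
  have hrecover : ∀ y ≠ x, x + τ y • (τ y)⁻¹ • (y - x) = y := fun y hy => by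
    rw [smul_smul, mul_inv_cancel₀ (hτpos y hy).ne', one_smul, add_sub_cancel]
  have hpath : Tendsto (fun y => (τ y, (τ y)⁻¹ • (y - x))) (𝓝[≠] x)
      ((𝓝[>] 0 ×ˢ 𝓝 0) ⊓ 𝓟 {p | x + p.1 • p.2 ∈ S}) := by
    refine tendsto_inf.2 ⟨Tendsto.prodMk ?_ ?_, tendsto_principal.2 ?_⟩
    · exact tendsto_nhdsWithin_iff.2 ⟨hτ.mono_left nhdsWithin_le_nhds,
        eventually_nhdsWithin_of_forall hτpos⟩
    · refine tendsto_zero_iff_norm_tendsto_zero.2 ((hτ.mono_left nhdsWithin_le_nhds).congr' ?_)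
      filter_upwards [self_mem_nhdsWithin] with y hy
      have hτy := hτpos y hy
      have hsq : ‖y - x‖ = τ y ^ 2 := (Real.sq_sqrt (norm_nonneg _)).symm
      rw [norm_smul, norm_inv, Real.norm_of_nonneg hτy.le, hsq]
      field_simp
    · filter_upwards [self_mem_nhdsWithin, nhdsWithin_le_nhds hS] with y hy hyS
      rwa [hrecover y hy]
  have hquot : Tendsto (fun y => (f y - f x) / τ y) (𝓝[≠] x) (𝓝 0) := by
    refine EReal.tendsto_coe.1 ((hd.comp hpath).congr' ?_)
    filter_upwards [self_mem_nhdsWithin] with y hy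
    simp only [Function.comp_apply, hrecover y hy]
  have hdiff : Tendsto (fun y => f y - f x) (𝓝[≠] x) (𝓝 0) := by
    refine (zero_mul (0 : ℝ) ▸ hquot.mul (hτ.mono_left nhdsWithin_le_nhds)).congr' ?_
    filter_upwards [self_mem_nhdsWithin] with y hy
    exact div_mul_cancel₀ _ (hτpos y hy).ne'
  exact continuousWithinAt_compl_self.1 (tendsto_sub_nhds_zero_iff.1 hdiff)

theorem mem_closure_of_mem_bouligandCone (hu : u ∈ bouligandCone S x) : x ∈ closure S := by
  obtain ⟨t, v, -, ht, hv, hmem⟩ := hu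
  refine mem_closure_of_tendsto (b := atTop) ?_ (Eventually.of_forall hmem)
  simpa using tendsto_const_nhds.add (ht.smul hv)

theorem exists_descent_of_lowerHadamardDeriv_lt {b r : ℝ} (hu : ‖u‖ ≤ 1) (hb : 0 ≤ b)
    (hr : 0 < r) (hlt : lowerHadamardDeriv f S x u < ((-b : ℝ) : EReal)) :
    ∃ y, dist x y < r ∧ f y + b / 2 * dist x y < f x := by
  have hnear : ∀ᶠ p : ℝ × EuclideanSpace ℝ (Fin l) in
      (𝓝[>] 0 ×ˢ 𝓝 u) ⊓ 𝓟 {p | x + p.1 • p.2 ∈ S}, p.1 ∈ Set.Ioo 0 (r / 2) ∧ dist p.2 u < 1 :=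
    mem_inf_of_left (prod_mem_prod (Ioo_mem_nhdsGT (half_pos hr)) (ball_mem_nhds u one_pos))
  obtain ⟨⟨t, v⟩, hq, ⟨ht, htr⟩, hv⟩ :=
    ((frequently_lt_of_liminf_lt (by isBoundedDefault) hlt).and_eventually hnear).exists
  have hdecr : f (x + t • v) - f x < -b * t := (div_lt_iff₀ ht).1 (EReal.coe_lt_coe_iff.1 hq)
  have hv2 : ‖v‖ < 2 := by linarith [norm_le_norm_add_norm_sub' v u, dist_eq_norm v u]
  have hdist : dist x (x + t • v) = t * ‖v‖ := by
    rw [dist_comm, dist_eq_norm, add_sub_cancel_left, norm_smul, Real.norm_of_nonneg ht.le]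
  refine ⟨x + t • v, ?_, ?_⟩ <;> rw [hdist]
  · nlinarith [norm_nonneg v]
  · nlinarith [mul_nonneg hb (mul_nonneg ht.le (sub_nonneg.2 hv2.le))]

end Hadamard

section Problem

variable {l m q : ℕ} {X : Set (EuclideanSpace ℝ (Fin l))} {g : Fin m → EuclideanSpace ℝ (Fin l) → ℝ}
  {hf : Fin q → EuclideanSpace ℝ (Fin l) → ℝ} {x xbar : EuclideanSpace ℝ (Fin l)}

theorem hsum_nonneg (hf : Fin q → EuclideanSpace ℝ (Fin l) → ℝ) (x : EuclideanSpace ℝ (Fin l)) :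
    0 ≤ hsum hf x :=
  Finset.sum_nonneg fun _ _ => sq_nonneg _

theorem isClosed_Gset (hX : IsClosed X) (hg : ∀ i, LowerSemicontinuous (g i)) :
    IsClosed (Gset X g) := by
  have hG : Gset X g = X ∩ ⋂ i, g i ⁻¹' Set.Iic 0 := by ext; simp [Gset]
  rw [hG]
  exact hX.inter (isClosed_iInter fun i => (hg i).isClosed_preimage 0)

theorem continuousOn_hsum {U : Set (EuclideanSpace ℝ (Fin l))} (hU : IsOpen U) (hUX : U ⊆ X)
    (hdiff : ∀ j, ∀ x ∈ X, ∃ d, HasHadamardDerivAt (hf j) X x 0 d) :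
    ContinuousOn (hsum hf) U := by
  refine fun x hx => ContinuousAt.continuousWithinAt ?_
  have hcont (j : Fin q) : ContinuousAt (hf j) x := by
    obtain ⟨d, hd⟩ := hdiff j x (hUX hx)
    exact hd.continuousAt (mem_of_superset (hU.mem_nhds hx) hUX)
  unfold hsum
  fun_prop

theorem mem_closure_Gset_of_dFun_lt_top (h : dFun hf X g x < ⊤) : x ∈ closure (Gset X g) := by
  obtain ⟨_, ⟨u, hu, -⟩, -⟩ := sInf_lt_iff.1 h
  exact mem_closure_of_mem_bouligandCone hu

theorem exists_descent_of_dFun_lt {b r : ℝ} (hb : 0 ≤ b) (hr : 0 < r)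
    (hlt : dFun hf X g x < ((-b : ℝ) : EReal)) :
    ∃ y, dist x y < r ∧ hsum hf y + b / 2 * dist x y < hsum hf x := by
  obtain ⟨_, ⟨u, -, hu, rfl⟩, hlt⟩ := sInf_lt_iff.1 hlt
  exact exists_descent_of_lowerHadamardDeriv_lt hu.le hb hr hlt

theorem closedBall_subset_Gset_of_dFun_le {δ a : ℝ} (hG : IsClosed (Gset X g))
    (hd : ∀ x, ‖x - xbar‖ ≤ δ → x ∉ Sset X g hf → dFun hf X g x ≤ ((-a : ℝ) : EReal)) :
    closedBall xbar δ ⊆ Gset X g := by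
  intro y hy
  by_cases hyS : y ∈ Sset X g hf
  · exact hyS.1
  · exact hG.closure_subset (mem_closure_Gset_of_dFun_lt_top
      ((hd y (mem_closedBall_iff_norm.1 hy) hyS).trans_lt (EReal.coe_lt_top _)))

theorem exists_mem_Sset_near_of_dFun_le {δ a ρ : ℝ} (hG : IsClosed (Gset X g)) (hδ : 0 < δ)
    (ha : 0 < a) (hρ : 0 < ρ) (hxbar : hsum hf xbar = 0)
    (hdiff : ∀ j, ∀ x ∈ X, ∃ d, HasHadamardDerivAt (hf j) X x 0 d)
    (hd : ∀ x, ‖x - xbar‖ ≤ δ → x ∉ Sset X g hf → dFun hf X g x ≤ ((-a : ℝ) : EReal)) :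
    ∃ η > 0, ∀ x, ‖x - xbar‖ ≤ η →
      ∃ x' ∈ Sset X g hf, ‖x' - xbar‖ ≤ ρ ∧ a / 4 * ‖x - x'‖ ≤ hsum hf x := by
  have hball := closedBall_subset_Gset_of_dFun_le hG hd
  have hcont : ContinuousOn (hsum hf) (ball xbar δ) := continuousOn_hsum isOpen_ball
    (fun y hy => (hball (ball_subset_closedBall hy)).1) hdiff
  set κ := min (δ / 4) (ρ / 2)
  have hκ : 0 < κ := by positivity
  obtain ⟨η, hη, hsmall⟩ := nhds_basis_closedBall.eventually_iff.1 <|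
    (hcont.continuousAt (ball_mem_nhds xbar hδ)).eventually
      (gt_mem_nhds (show hsum hf xbar < a / 4 * κ by rw [hxbar]; positivity))
  refine ⟨min η κ, lt_min hη hκ, fun x hx => ?_⟩
  rw [← dist_eq_norm] at hx
  have hxK : closedBall x κ ⊆ ball xbar δ := fun y hy => by
    rw [mem_closedBall] at hy
    rw [mem_ball]
    linarith [dist_triangle y x xbar, min_le_right η κ, min_le_left (δ / 4) (ρ / 2)]
  have hdesc : ∀ y ∈ ball x κ, 0 < hsum hf y →
      ∀ r > 0, ∃ z, dist y z < r ∧ hsum hf z + a / 4 * dist y z < hsum hf y := by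
    intro y hy hpos r hr
    have hyS : y ∉ Sset X g hf := fun hyS => hpos.ne' hyS.2
    have hyδ : ‖y - xbar‖ ≤ δ :=
      mem_closedBall_iff_norm.1 (ball_subset_closedBall (hxK (ball_subset_closedBall hy)))
    have hlt : dFun hf X g y < ((-(a / 2) : ℝ) : EReal) :=
      (hd y hyδ hyS).trans_lt (EReal.coe_lt_coe_iff.2 (by linarith))
    simpa only [div_div, show (2 : ℝ) * 2 = 4 by norm_num] using
      exists_descent_of_dFun_lt (by positivity) hr hlt
  have hxsmall : hsum hf x < a / 4 * κ := hsmall (mem_closedBall.2 (hx.trans (min_le_left _ _)))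
  obtain ⟨x', hx'0, hx'⟩ := exists_zero_of_forall_descent (by positivity) (hcont.mono hxK)
    (hsum_nonneg hf) hxsmall hdesc
  have hxx' : dist x x' < κ := lt_of_mul_lt_mul_left (hx'.trans_lt hxsmall) (by positivity)
  have hx'ρ : ‖x' - xbar‖ ≤ ρ := by
    rw [← dist_eq_norm]
    linarith [dist_triangle x' x xbar, dist_comm x x', min_le_right η κ,
      min_le_right (δ / 4) (ρ / 2)]
  have hx'G : x' ∈ Gset X g :=
    hball (ball_subset_closedBall (hxK (mem_closedBall.2 (by rw [dist_comm]; exact hxx'.le))))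
  exact ⟨x', ⟨hx'G, hx'0⟩, hx'ρ, by rwa [← dist_eq_norm]⟩

end Problem

theorem exact_penalty_isolated_general
    {l m q : ℕ}
    {X : Set (EuclideanSpace ℝ (Fin l))}
    {f : EuclideanSpace ℝ (Fin l) → ℝ}
    {g : Fin m → EuclideanSpace ℝ (Fin l) → ℝ}
    {hf : Fin q → EuclideanSpace ℝ (Fin l) → ℝ}
    {xbar : EuclideanSpace ℝ (Fin l)}
    {δ L a : ℝ}
    (hX : IsClosed X)
    (hfeas : xbar ∈ Sset X g hf)
    (hiso : ∃ A > (0 : ℝ), ∃ ε > (0 : ℝ), ∀ x ∈ Sset X g hf, ‖x - xbar‖ ≤ ε →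
      f xbar + A * ‖x - xbar‖ ≤ f x)
    (hδ : 0 < δ)
    (hLip : ∀ x ∈ {y | ‖y - xbar‖ ≤ δ} ∩ X, ∀ y ∈ {y | ‖y - xbar‖ ≤ δ} ∩ X,
      |f x - f y| ≤ L * ‖x - y‖)
    (hglsc : ∀ i, LowerSemicontinuous (g i))
    (hhdiff : ∀ j, ∀ x ∈ X, ∀ u, ∃ d : EReal, HasHadamardDerivAt (hf j) X x u d)
    (ha : 0 < a)
    (hd : ∀ x, ‖x - xbar‖ ≤ δ → x ∉ Sset X g hf → dFun hf X g x ≤ ((-a : ℝ) : EReal)) :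
    ∃ s : ℤ, ∀ γ : ℝ, (s : ℝ) < γ →
      ∃ A > (0 : ℝ), ∃ ε > (0 : ℝ), ∀ x ∈ Gset X g, ‖x - xbar‖ ≤ ε →
        Fpen f hf xbar γ xbar + A * ‖x - xbar‖ ≤ Fpen f hf xbar γ x := by
  obtain ⟨A, hA, ε, hε, hmin⟩ := hiso
  obtain ⟨η, hη, hnear⟩ := exists_mem_Sset_near_of_dFun_le (isClosed_Gset hX hglsc) hδ ha
    (lt_min hδ hε) hfeas.2 (fun j x hx => hhdiff j x hx 0) hd
  have hc : 0 < a / 4 := by positivity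
  refine ⟨⌈(|L| + A) / (a / 4)⌉, fun γ hγ => ⟨A, hA, min η δ, lt_min hη hδ, fun x hxG hx => ?_⟩⟩
  have hγc : |L| + A ≤ γ * (a / 4) := (div_le_iff₀ hc).1 ((Int.le_ceil _).trans hγ.le)
  obtain ⟨x', hx'S, hx'ρ, herr⟩ := hnear x (hx.trans (min_le_left _ _))
  have hlip := hLip x ⟨hx.trans (min_le_right _ _), hxG.1⟩ x'
    ⟨hx'ρ.trans (min_le_left _ _), hx'S.1.1⟩
  have hγ0 : 0 ≤ γ := by nlinarith [abs_nonneg L]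
  have hpen := le_add_mul_of_dist_le hA.le hγ0 (by linarith [le_abs_self L])
    (hmin x' hx'S (hx'ρ.trans (min_le_right _ _))) hlip herr
  have hquad : 0 ≤ 1 / 2 * ‖x - xbar‖ ^ 2 := by positivity
  simp only [Fpen, hfeas.2, sub_self, norm_zero]
  linarith

/-- Theorem 4.2: under the hypotheses of Theorem 2.1, if moreover `xbar` is an isolated local
minimizer of (P), then `xbar` is an isolated local minimizer of `F(·,γ)` over `G` for every
`γ > s`, for some integer `s`. -/
theorem exact_penalty_isolated
    {l m q : ℕ}
    {X : Set (EuclideanSpace ℝ (Fin l))}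
    {f : EuclideanSpace ℝ (Fin l) → ℝ}
    {g : Fin m → EuclideanSpace ℝ (Fin l) → ℝ}
    {hf : Fin q → EuclideanSpace ℝ (Fin l) → ℝ}
    {xbar : EuclideanSpace ℝ (Fin l)}
    {δ L a : ℝ}
    (hX : IsClosed X)
    (hfeas : xbar ∈ Sset X g hf)
    (hiso : ∃ A > (0 : ℝ), ∃ ε > (0 : ℝ), ∀ x ∈ Sset X g hf, ‖x - xbar‖ ≤ ε →
      f xbar + A * ‖x - xbar‖ ≤ f x)
    (hδ : 0 < δ)
    (hLip : ∀ x ∈ {y | ‖y - xbar‖ ≤ δ} ∩ X, ∀ y ∈ {y | ‖y - xbar‖ ≤ δ} ∩ X,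
      |f x - f y| ≤ L * ‖x - y‖)
    (hglsc : ∀ i, LowerSemicontinuous (g i))
    (hhdiff : ∀ j, ∀ x ∈ X, ∀ u, ∃ d : EReal, HasHadamardDerivAt (hf j) X x u d)
    (hhlsc : ∀ j, LowerSemicontinuous (hf j))
    (ha : 0 < a)
    (hd : ∀ x, ‖x - xbar‖ ≤ δ → x ∉ Sset X g hf → dFun hf X g x ≤ ((-a : ℝ) : EReal)) :
    ∃ s : ℤ, ∀ γ : ℝ, (s : ℝ) < γ →
      ∃ A > (0 : ℝ), ∃ ε > (0 : ℝ), ∀ x ∈ Gset X g, ‖x - xbar‖ ≤ ε →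
        Fpen f hf xbar γ xbar + A * ‖x - xbar‖ ≤ Fpen f hf xbar γ x :=
  exact_penalty_isolated_general hX hfeas hiso hδ hLip hglsc hhdiff ha hd
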